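/- Let W be a partition of [n], and for each I ∈ W let f_I be a continuous, convex, unitarily invariant function on states of H_I = ⊗_{i∈I} H_i. Let p be a probability vector. Then the maximum of Σ_{I∈W} f_I(τ_I) over all states τ on H_{[n]} = ⊗_{i∈[n]} H_i with λ(τ) majorized by p is achieved at a classical state, i.e., one diagonal in a fixed product basis. -/

import Mathlib

open Finset Matrix
open scoped Kronecker ComplexOrder

/-- `x` majorizes `y`: every subset-sum of `y` is dominated by some subset-sum of `x`
of the same cardinality (equivalently, all top-`k` partial sums of the non-increasing
rearrangements dominate), and the total sums agree. -/
def Majorizes {ι κ : Type*} [Fintype ι] [Fintype κ] (x : ι → ℝ) (y : κ → ℝ) : Prop :=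
  (∀ t : Finset κ, ∃ s : Finset ι, s.card = t.card ∧ ∑ j ∈ t, y j ≤ ∑ i ∈ s, x i) ∧
    ∑ j, y j = ∑ i, x i
/-- Combine a configuration on the qudits in `I` with one on the qudits in `Iᶜ`. -/
def glue {n : ℕ} {dv : Fin n → ℕ} (I : Finset (Fin n))
    (a : (i : ↥I) → Fin (dv i.1)) (b : (j : ↥(Iᶜ)) → Fin (dv j.1)) :
    (i : Fin n) → Fin (dv i) :=
  fun i => if h : i ∈ I then a ⟨i, h⟩ else b ⟨i, Finset.mem_compl.mpr h⟩

/-- The partial trace over the complement of `I` (the marginal on the qudits in `I`). -/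
noncomputable def ptrace {n : ℕ} {dv : Fin n → ℕ}
    (τ : Matrix ((i : Fin n) → Fin (dv i)) ((i : Fin n) → Fin (dv i)) ℂ)
    (I : Finset (Fin n)) :
    Matrix ((i : ↥I) → Fin (dv i.1)) ((i : ↥I) → Fin (dv i.1)) ℂ :=
  Matrix.of fun a b =>
    ∑ c : (j : ↥(Iᶜ)) → Fin (dv j.1), τ (glue I a c) (glue I b c)

/-- A quantum state: positive semi-definite with unit trace. -/
def IsState {m : Type*} [Fintype m] [DecidableEq m] (M : Matrix m m ℂ) : Prop :=
  M.PosSemidef ∧ M.trace = 1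

/-!
For a feasible `τ`, let `U` be the product over `I ∈ W` of local unitaries diagonalizing the
marginals `τ_I`. They act on disjoint registers, so the marginals of `U τ U*` are the diagonal
matrices `diag λ(τ_I)`, and decohering `U τ U*` in the product basis leaves them unchanged. The
resulting classical state has spectrum majorized by `λ(τ)` (Schur), hence by `p`, and by unitary
invariance it has the same objective value. So every feasible value is bounded by the maximum of
the objective over the compact set of feasible classical states, which exists by continuity.
-/

lemma Majorizes.refl {ι : Type*} [Fintype ι] (x : ι → ℝ) : Majorizes x x :=
  ⟨fun t => ⟨t, rfl, le_rfl⟩, rfl⟩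

lemma Majorizes.trans {ι κ μ : Type*} [Fintype ι] [Fintype κ] [Fintype μ]
    {x : ι → ℝ} {y : κ → ℝ} {z : μ → ℝ} (hxy : Majorizes x y) (hyz : Majorizes y z) :
    Majorizes x z := by
  refine ⟨fun t => ?_, hyz.2.trans hxy.2⟩
  obtain ⟨s, hs, hts⟩ := hyz.1 t
  obtain ⟨r, hr, hsr⟩ := hxy.1 s
  exact ⟨r, hr.trans hs, hts.trans hsr⟩

section TopSums

variable {ι : Type*} [Fintype ι] [DecidableEq ι]

lemma exists_card_eq_forall_le (x : ι → ℝ) {k : ℕ} (hk : k ≤ Fintype.card ι) :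
    ∃ s : Finset ι, #s = k ∧ ∀ i ∈ s, ∀ j ∉ s, x j ≤ x i := by
  induction k with
  | zero => exact ⟨∅, rfl, by simp⟩
  | succ k ih =>
    obtain ⟨s, hs, hsx⟩ := ih (by omega)
    have hne : sᶜ.Nonempty := by
      rw [← Finset.card_pos, Finset.card_compl]
      omega
    obtain ⟨j, hj, hjmax⟩ := sᶜ.exists_max_image x hne
    rw [Finset.mem_compl] at hj
    refine ⟨insert j s, by rw [Finset.card_insert_of_notMem hj, hs], ?_⟩
    intro i hi l hl
    rw [Finset.mem_insert, not_or] at hl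
    obtain rfl | hi := Finset.mem_insert.1 hi
    · exact hjmax l (Finset.mem_compl.2 hl.2)
    · exact hsx i hi l hl.2

lemma sum_mul_le_sum_of_forall_le {x w : ι → ℝ} {s : Finset ι}
    (hs : ∀ i ∈ s, ∀ j ∉ s, x j ≤ x i) (hw0 : ∀ i, 0 ≤ w i) (hw1 : ∀ i, w i ≤ 1)
    (hw : ∑ i, w i = #s) : ∑ i, w i * x i ≤ ∑ i ∈ s, x i := by
  obtain ⟨m, hms, hmc⟩ : ∃ m, (∀ i ∈ s, m ≤ x i) ∧ ∀ j ∉ s, x j ≤ m := by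
    rcases s.eq_empty_or_nonempty with rfl | hne
    · exact ⟨∑ i, |x i|, by simp, fun j _ =>
        (le_abs_self _).trans (Finset.single_le_sum (fun i _ => abs_nonneg (x i)) (mem_univ j))⟩
    · exact ⟨s.inf' hne x, fun i hi => Finset.inf'_le x hi,
        fun j hj => Finset.le_inf' hne x fun i hi => hs i hi j hj⟩
  have hterm : ∀ i, w i * (x i - m) ≤ if i ∈ s then x i - m else 0 := by
    intro i
    split_ifs with hi
    · exact mul_le_of_le_one_left (sub_nonneg.2 (hms i hi)) (hw1 i)
    · exact mul_nonpos_of_nonneg_of_nonpos (hw0 i) (sub_nonpos.2 (hmc i hi))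
  have hsum := Finset.sum_le_sum fun i (_ : i ∈ univ) => hterm i
  rw [Finset.sum_ite_mem, Finset.univ_inter, Finset.sum_sub_distrib, Finset.sum_const,
    nsmul_eq_mul] at hsum
  simp only [mul_sub, Finset.sum_sub_distrib, ← Finset.sum_mul, hw] at hsum
  linarith

lemma majorizes_mulVec_of_mem_doublyStochastic {M : Matrix ι ι ℝ}
    (hM : M ∈ doublyStochastic ℝ ι) (x : ι → ℝ) : Majorizes x (M *ᵥ x) := by
  refine ⟨fun t => ?_, ?_⟩
  · obtain ⟨s, hs, hsx⟩ := exists_card_eq_forall_le x (card_le_univ t)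
    refine ⟨s, hs, ?_⟩
    have hsum : ∑ j ∈ t, (M *ᵥ x) j = ∑ i, (∑ j ∈ t, M j i) * x i := by
      simp only [mulVec, dotProduct, Finset.sum_mul]
      exact Finset.sum_comm
    rw [hsum]
    refine sum_mul_le_sum_of_forall_le hsx (fun i => sum_nonneg fun j _ =>
      nonneg_of_mem_doublyStochastic hM) (fun i => ?_) ?_
    · rw [← sum_col_of_mem_doublyStochastic hM i]
      exact sum_le_sum_of_subset_of_nonneg (subset_univ t)
        fun j _ _ => nonneg_of_mem_doublyStochastic hM
    · rw [Finset.sum_comm, hs]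
      simp [sum_row_of_mem_doublyStochastic hM]
  · exact sum_mulVec_of_mem_doublyStochastic hM

end TopSums

section Compact

variable {ι : Type*} [Fintype ι]

lemma isClosed_setOf_majorizes (p : ι → ℝ) : IsClosed {q : ι → ℝ | Majorizes p q} := by
  simp only [Majorizes, Set.ofPred_and, Set.ofPred_forall, Set.ofPred_exists]
  exact .inter (isClosed_iInter fun t => isClosed_iUnion_of_finite fun s =>
      isClosed_const.inter (isClosed_le (by fun_prop) continuous_const))
    (isClosed_eq (by fun_prop) continuous_const)

lemma isCompact_setOf_nonneg_majorizes (p : ι → ℝ) :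
    IsCompact {q : ι → ℝ | (∀ i, 0 ≤ q i) ∧ Majorizes p q} := by
  refine (isCompact_Icc (a := 0) (b := fun _ => ∑ i, p i)).of_isClosed_subset ?_ ?_
  · rw [Set.ofPred_and, Set.ofPred_forall]
    exact (isClosed_iInter fun i => isClosed_le continuous_const (continuous_apply i)).inter
      (isClosed_setOf_majorizes p)
  · rintro q ⟨hq0, hpq⟩
    exact ⟨hq0, fun i => hpq.2 ▸ single_le_sum (fun j _ => hq0 j) (mem_univ i)⟩

end Compact

section Schur

variable {m : Type*} [Fintype m] [DecidableEq m]

lemma normSq_mem_doublyStochastic {U : Matrix m m ℂ} (hU : U ∈ unitaryGroup m ℂ) :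
    (of fun i j => Complex.normSq (U i j)) ∈ doublyStochastic ℝ m := by
  have hentry : ∀ {A B : Matrix m m ℂ}, A * B = 1 → ∀ i, (A * B) i i = 1 := by
    intro A B h i
    rw [h, one_apply_eq]
  rw [mem_doublyStochastic_iff_sum]
  refine ⟨fun i j => Complex.normSq_nonneg _, fun i => ?_, fun j => ?_⟩
  · have h := congrArg Complex.re (hentry (mem_unitaryGroup_iff.1 hU) i)
    simpa [mul_apply, Complex.mul_conj, Complex.re_sum] using h
  · have h := congrArg Complex.re (hentry (mem_unitaryGroup_iff'.1 hU) j)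
    simpa [mul_apply, Complex.re_sum, Complex.normSq_apply] using h

lemma re_diag_conj_diagonal (U : Matrix m m ℂ) (c : m → ℝ) (j : m) :
    ((U * diagonal (fun i => (c i : ℂ)) * star U) j j).re =
      ((of fun i j => Complex.normSq (U i j)) *ᵥ c) j := by
  rw [mul_apply, Complex.re_sum]
  refine Finset.sum_congr rfl fun i _ => ?_
  rw [mul_diagonal, star_apply, Complex.star_def, mul_right_comm, Complex.mul_conj,
    ← Complex.ofReal_mul, Complex.ofReal_re]
  rfl

lemma majorizes_re_diag_conj_diagonal {U : Matrix m m ℂ} (hU : U ∈ unitaryGroup m ℂ)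
    (c : m → ℝ) :
    Majorizes c fun j => ((U * diagonal (fun i => (c i : ℂ)) * star U) j j).re := by
  simp only [re_diag_conj_diagonal]
  exact majorizes_mulVec_of_mem_doublyStochastic (normSq_mem_doublyStochastic hU) c

lemma Matrix.IsHermitian.majorizes_re_diag_conj {A : Matrix m m ℂ} (hA : A.IsHermitian)
    {U : Matrix m m ℂ} (hU : U ∈ unitaryGroup m ℂ) :
    Majorizes hA.eigenvalues fun j => ((U * A * star U) j j).re := by
  have hUE := mul_mem hU hA.eigenvectorUnitary.2
  have hconj : U * A * star U = (U * hA.eigenvectorUnitary) *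
      diagonal (fun i => (hA.eigenvalues i : ℂ)) * star (U * hA.eigenvectorUnitary) := by
    conv_lhs => rw [hA.spectral_theorem]
    simp [Unitary.conjStarAlgAut_apply, star_mul, mul_assoc, Function.comp_def]
  rw [hconj]
  exact majorizes_re_diag_conj_diagonal hUE hA.eigenvalues

lemma majorizes_eigenvalues_diagonal (c : m → ℝ)
    (hc : (diagonal fun i => (c i : ℂ)).IsHermitian) : Majorizes c hc.eigenvalues := by
  have hE := Unitary.star_mem hc.eigenvectorUnitary.2
  convert majorizes_re_diag_conj_diagonal hE c
  have hdiag := hc.conjStarAlgAut_star_eigenvectorUnitary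
  rw [Unitary.conjStarAlgAut_star_apply] at hdiag
  simp [star_star, hdiag]

end Schur

namespace Matrix

variable {m o R : Type*}

def traceRight [Fintype o] [AddCommMonoid R] (A : Matrix (m × o) (m × o) R) : Matrix m m R :=
  of fun a b => ∑ c, A (a, c) (b, c)

lemma traceRight_kronecker_mul_mul [Fintype m] [Fintype o] [DecidableEq o] [CommSemiring R]
    [StarRing R]
    (P : Matrix m m R) {Q : Matrix o o R} (hQ : star Q * Q = 1) (A : Matrix (m × o) (m × o) R) :
    traceRight (P ⊗ₖ Q * A * star (P ⊗ₖ Q)) = P * traceRight A * star P := by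
  have hQ' : ∀ d e, ∑ c, star (Q c e) * Q c d = if e = d then 1 else 0 := fun d e => by
    rw [← one_apply, ← hQ, mul_apply]
    rfl
  ext a b
  simp only [traceRight, of_apply, mul_apply, star_apply, kroneckerMap_apply,
    Fintype.sum_prod_type, Finset.sum_mul, Finset.mul_sum, star_mul']
  rw [Finset.sum_comm]
  refine Finset.sum_congr rfl fun v _ => ?_
  have hc : ∀ e u d, ∑ c, P a u * Q c d * A (u, d) (v, e) * (star (P b v) * star (Q c e)) =
      if e = d then P a u * A (u, d) (v, e) * star (P b v) else 0 := fun e u d => by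
    rw [← mul_boole, ← hQ', Finset.mul_sum]
    exact Finset.sum_congr rfl fun c _ => by ring
  calc _ = ∑ e, ∑ u, ∑ d, ∑ c,
        P a u * Q c d * A (u, d) (v, e) * (star (P b v) * star (Q c e)) := by
        rw [Finset.sum_comm]
        exact Finset.sum_congr rfl fun e _ => Finset.sum_comm.trans
          (Finset.sum_congr rfl fun u _ => Finset.sum_comm)
    _ = ∑ u, ∑ e, ∑ d, if e = d then P a u * A (u, d) (v, e) * star (P b v) else 0 := by
        simp only [hc]
        exact Finset.sum_comm
    _ = _ := by simp

lemma traceRight_diagonal [Fintype o] [DecidableEq m] [DecidableEq o] [AddCommMonoid R]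
    (d : m × o → R) :
    traceRight (diagonal d) = diagonal fun a => ∑ c, d (a, c) := by
  ext a b
  by_cases h : a = b
  · simp [traceRight, h]
  · simp [traceRight, h, diagonal_apply_ne]

lemma IsHermitian.traceRight [Fintype o] [AddCommMonoid R] [StarAddMonoid R]
    {A : Matrix (m × o) (m × o) R} (hA : A.IsHermitian) : A.traceRight.IsHermitian := by
  ext a b
  simp only [conjTranspose_apply, Matrix.traceRight, of_apply, star_sum]
  exact Finset.sum_congr rfl fun c _ => hA.apply (a, c) (b, c)

lemma one_kronecker_injective [DecidableEq m] [Nonempty m] [MulZeroOneClass R] :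
    Function.Injective fun Q : Matrix o o R => (1 : Matrix m m R) ⊗ₖ Q := by
  intro Q Q' h
  obtain ⟨a⟩ := ‹Nonempty m›
  ext c d
  simpa using congrFun (congrFun h (a, c)) (a, d)

end Matrix

section Qudits

variable {n : ℕ} {dv : Fin n → ℕ}

def glueEquiv (I : Finset (Fin n)) :
    ((i : ↥I) → Fin (dv i.1)) × ((j : ↥(Iᶜ)) → Fin (dv j.1)) ≃ ((i : Fin n) → Fin (dv i)) where
  toFun x := glue I x.1 x.2
  invFun a := (fun i => a i, fun j => a j)
  left_inv x := by
    have hc : ∀ j : ↥(Iᶜ), j.1 ∉ I := fun j => Finset.mem_compl.1 j.2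
    ext i
    · simp [glue, i.2]
    · simp [glue, hc]
  right_inv a := by
    funext i
    by_cases h : i ∈ I <;> simp [glue, h]

lemma ptrace_eq_traceRight (τ : Matrix ((i : Fin n) → Fin (dv i)) ((i : Fin n) → Fin (dv i)) ℂ)
    (I : Finset (Fin n)) :
    ptrace τ I = traceRight (reindex (glueEquiv I).symm (glueEquiv I).symm τ) :=
  rfl

def kronAt (I : Finset (Fin n))
    (P : Matrix ((i : ↥I) → Fin (dv i.1)) ((i : ↥I) → Fin (dv i.1)) ℂ)
    (Q : Matrix ((j : ↥(Iᶜ)) → Fin (dv j.1)) ((j : ↥(Iᶜ)) → Fin (dv j.1)) ℂ) :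
    Matrix ((i : Fin n) → Fin (dv i)) ((i : Fin n) → Fin (dv i)) ℂ :=
  reindex (glueEquiv I) (glueEquiv I) (P ⊗ₖ Q)

variable (I : Finset (Fin n))

lemma reindex_symm_kronAt
    (P : Matrix ((i : ↥I) → Fin (dv i.1)) ((i : ↥I) → Fin (dv i.1)) ℂ)
    (Q : Matrix ((j : ↥(Iᶜ)) → Fin (dv j.1)) ((j : ↥(Iᶜ)) → Fin (dv j.1)) ℂ) :
    reindex (glueEquiv I).symm (glueEquiv I).symm (kronAt I P Q) = P ⊗ₖ Q := by
  rw [← reindex_symm]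
  exact (reindex _ _).symm_apply_apply _

lemma kronAt_apply
    (P : Matrix ((i : ↥I) → Fin (dv i.1)) ((i : ↥I) → Fin (dv i.1)) ℂ)
    (Q : Matrix ((j : ↥(Iᶜ)) → Fin (dv j.1)) ((j : ↥(Iᶜ)) → Fin (dv j.1)) ℂ)
    (a b : (i : Fin n) → Fin (dv i)) :
    kronAt I P Q a b = P (fun i => a i) (fun i => b i) * Q (fun j => a j) (fun j => b j) :=
  rfl

lemma kronAt_mul_kronAt (P P' : Matrix ((i : ↥I) → Fin (dv i.1)) ((i : ↥I) → Fin (dv i.1)) ℂ)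
    (Q Q' : Matrix ((j : ↥(Iᶜ)) → Fin (dv j.1)) ((j : ↥(Iᶜ)) → Fin (dv j.1)) ℂ) :
    kronAt I P Q * kronAt I P' Q' = kronAt I (P * P') (Q * Q') := by
  simp only [kronAt, mul_kronecker_mul, reindex_apply, submatrix_mul_equiv]

lemma kronAt_one_one : kronAt (dv := dv) I 1 1 = 1 := by
  simp [kronAt]

lemma star_kronAt (P : Matrix ((i : ↥I) → Fin (dv i.1)) ((i : ↥I) → Fin (dv i.1)) ℂ)
    (Q : Matrix ((j : ↥(Iᶜ)) → Fin (dv j.1)) ((j : ↥(Iᶜ)) → Fin (dv j.1)) ℂ) :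
    star (kronAt I P Q) = kronAt I (star P) (star Q) := by
  simp [kronAt, star_eq_conjTranspose, conjTranspose_kronecker]

lemma kronAt_mem_unitaryGroup
    {P : Matrix ((i : ↥I) → Fin (dv i.1)) ((i : ↥I) → Fin (dv i.1)) ℂ}
    {Q : Matrix ((j : ↥(Iᶜ)) → Fin (dv j.1)) ((j : ↥(Iᶜ)) → Fin (dv j.1)) ℂ}
    (hP : P ∈ unitaryGroup _ ℂ) (hQ : Q ∈ unitaryGroup _ ℂ) :
    kronAt I P Q ∈ unitaryGroup _ ℂ := by
  rw [mem_unitaryGroup_iff, star_kronAt, kronAt_mul_kronAt, mem_unitaryGroup_iff.1 hP,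
    mem_unitaryGroup_iff.1 hQ, kronAt_one_one]

lemma kronAt_one_injective [Nonempty ((i : ↥I) → Fin (dv i.1))] :
    Function.Injective (kronAt (dv := dv) I 1) :=
  (reindex (glueEquiv I) (glueEquiv I)).injective.comp one_kronecker_injective

lemma ptrace_kronAt_mul_mul (P : Matrix ((i : ↥I) → Fin (dv i.1)) ((i : ↥I) → Fin (dv i.1)) ℂ)
    {Q : Matrix ((j : ↥(Iᶜ)) → Fin (dv j.1)) ((j : ↥(Iᶜ)) → Fin (dv j.1)) ℂ}
    (hQ : Q ∈ unitaryGroup _ ℂ)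
    (τ : Matrix ((i : Fin n) → Fin (dv i)) ((i : Fin n) → Fin (dv i)) ℂ) :
    ptrace (kronAt I P Q * τ * star (kronAt I P Q)) I = P * ptrace τ I * star P := by
  rw [ptrace_eq_traceRight, ptrace_eq_traceRight, ← traceRight_kronecker_mul_mul P
    (mem_unitaryGroup_iff'.1 hQ)]
  congr 1
  rw [← coe_reindexAlgEquiv ℂ ℂ, map_mul, map_mul, star_kronAt, coe_reindexAlgEquiv,
    reindex_symm_kronAt, reindex_symm_kronAt, star_eq_conjTranspose (P ⊗ₖ Q),
    conjTranspose_kronecker]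
  rfl

lemma ptrace_diagonal_diag (τ : Matrix ((i : Fin n) → Fin (dv i)) ((i : Fin n) → Fin (dv i)) ℂ) :
    ptrace (diagonal τ.diag) I = diagonal (ptrace τ I).diag := by
  rw [ptrace_eq_traceRight, reindex_apply, submatrix_diagonal_equiv, traceRight_diagonal]
  rfl

lemma Matrix.IsHermitian.ptrace
    {τ : Matrix ((i : Fin n) → Fin (dv i)) ((i : Fin n) → Fin (dv i)) ℂ} (hτ : τ.IsHermitian) :
    (ptrace τ I).IsHermitian := by
  rw [ptrace_eq_traceRight]
  exact (hτ.submatrix _).traceRight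

end Qudits

section ProductUnitary

variable {n : ℕ} {dv : Fin n → ℕ}

lemma exists_kronAt_one_eq_of_disjoint {I J : Finset (Fin n)} (hIJ : Disjoint I J)
    (P : Matrix ((j : ↥J) → Fin (dv j.1)) ((j : ↥J) → Fin (dv j.1)) ℂ) :
    ∃ Q, kronAt J P 1 = kronAt I 1 Q := by
  have hJ : ∀ j : ↥J, j.1 ∈ Iᶜ := fun j => mem_compl.2 (disjoint_right.1 hIJ j.2)
  refine ⟨of fun c d => P (fun j => c ⟨j, hJ j⟩) (fun j => d ⟨j, hJ j⟩) *
    if ∀ i, (h : i ∉ I) → i ∉ J → c ⟨i, mem_compl.2 h⟩ = d ⟨i, mem_compl.2 h⟩ then 1 else 0, ?_⟩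
  ext a b
  have hiff : (∀ i, i ∉ J → a i = b i) ↔
      (∀ i ∈ I, a i = b i) ∧ ∀ i, i ∉ I → i ∉ J → a i = b i := by
    refine ⟨fun h => ⟨fun i hi => h i (disjoint_left.1 hIJ hi), fun i _ => h i⟩,
      fun ⟨hI, hIc⟩ i hi => ?_⟩
    by_cases h : i ∈ I
    exacts [hI i h, hIc i h hi]
  simp only [kronAt_apply, of_apply, one_apply, funext_iff, Subtype.forall, mem_compl, hiff]
  split_ifs <;> simp_all

lemma exists_unitary_forall_eq_kronAt (W : Finset (Finset (Fin n)))
    (hW : (W : Set (Finset (Fin n))).Pairwise Disjoint)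
    (P : (I : Finset (Fin n)) → Matrix ((i : ↥I) → Fin (dv i.1)) ((i : ↥I) → Fin (dv i.1)) ℂ)
    (hP : ∀ I ∈ W, P I ∈ unitaryGroup _ ℂ) :
    ∃ U ∈ unitaryGroup _ ℂ, (∀ I ∈ W, ∃ Q, U = kronAt I (P I) Q) ∧
      ∀ J, (∀ I ∈ W, Disjoint I J) → ∃ Q, U = kronAt J 1 Q := by
  induction W using Finset.induction_on with
  | empty => exact ⟨1, one_mem _, by simp, fun J _ => ⟨1, (kronAt_one_one J).symm⟩⟩
  | insert A W hA ih =>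
    have hAW : ∀ I ∈ W, Disjoint A I := fun I hI =>
      hW (mem_insert_self A W) (mem_insert_of_mem hI) (ne_of_mem_of_not_mem hI hA).symm
    obtain ⟨U, hU, hUW, hUc⟩ := ih (hW.mono (by simp)) fun I hI => hP I (mem_insert_of_mem hI)
    have hPA := kronAt_mem_unitaryGroup A (hP A (mem_insert_self A W)) (one_mem _)
    refine ⟨kronAt A (P A) 1 * U, mul_mem hPA hU, fun I hI => ?_, fun J hJ => ?_⟩
    · rcases mem_insert.1 hI with rfl | hI
      · obtain ⟨Q, hQ⟩ := hUc I fun J hJ => (hAW J hJ).symm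
        exact ⟨Q, by rw [hQ, kronAt_mul_kronAt, mul_one, one_mul]⟩
      · obtain ⟨Q, hQ⟩ := hUW I hI
        obtain ⟨Q', hQ'⟩ := exists_kronAt_one_eq_of_disjoint (hAW I hI).symm (P A)
        exact ⟨Q' * Q, by rw [hQ', hQ, kronAt_mul_kronAt, one_mul]⟩
    · obtain ⟨Q, hQ⟩ := hUc J fun I hI => hJ I (mem_insert_of_mem hI)
      obtain ⟨Q', hQ'⟩ := exists_kronAt_one_eq_of_disjoint (hJ A (mem_insert_self A W)).symm (P A)
      exact ⟨Q' * Q, by rw [hQ', hQ, kronAt_mul_kronAt, one_mul]⟩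

lemma exists_unitary_forall_ptrace_conj [Nonempty ((i : Fin n) → Fin (dv i))]
    (W : Finset (Finset (Fin n))) (hW : (W : Set (Finset (Fin n))).Pairwise Disjoint)
    (P : (I : Finset (Fin n)) → Matrix ((i : ↥I) → Fin (dv i.1)) ((i : ↥I) → Fin (dv i.1)) ℂ)
    (hP : ∀ I ∈ W, P I ∈ unitaryGroup _ ℂ) :
    ∃ U ∈ unitaryGroup _ ℂ, ∀ I ∈ W, ∀ τ,
      ptrace (U * τ * star U) I = P I * ptrace τ I * star (P I) := by
  obtain ⟨U, hU, hUW, -⟩ := exists_unitary_forall_eq_kronAt W hW P hP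
  refine ⟨U, hU, fun I hI τ => ?_⟩
  obtain ⟨Q, rfl⟩ := hUW I hI
  have : Nonempty ((i : ↥I) → Fin (dv i.1)) :=
    ⟨fun i => Classical.arbitrary ((i : Fin n) → Fin (dv i)) i.1⟩
  have hQ : kronAt I 1 Q ∈ unitaryGroup _ ℂ := by
    have h := mul_mem (kronAt_mem_unitaryGroup I (Unitary.star_mem (hP I hI)) (one_mem _)) hU
    rwa [kronAt_mul_kronAt, mem_unitaryGroup_iff'.1 (hP I hI), one_mul] at h
  rw [mem_unitaryGroup_iff, star_kronAt, star_one, kronAt_mul_kronAt, mul_one,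
    ← kronAt_one_one I] at hQ
  exact ptrace_kronAt_mul_mul I (P I) (mem_unitaryGroup_iff.2 (kronAt_one_injective I hQ)) τ

end ProductUnitary

section Classical

variable {n : ℕ} {dv : Fin n → ℕ}

lemma isState_diagonal {m : Type*} [Fintype m] [DecidableEq m] {q : m → ℝ} (hq0 : ∀ x, 0 ≤ q x)
    (hq1 : ∑ x, q x = 1) : IsState (diagonal fun x => (q x : ℂ)) :=
  ⟨PosSemidef.diagonal fun x => Complex.zero_le_real.2 (hq0 x), by
    rw [trace_diagonal, ← Complex.ofReal_sum, hq1, Complex.ofReal_one]⟩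

lemma exists_diagonal_forall_ptrace_conj [Nonempty ((i : Fin n) → Fin (dv i))]
    (W : Finset (Finset (Fin n))) (hW : (W : Set (Finset (Fin n))).Pairwise Disjoint)
    {τ : Matrix ((i : Fin n) → Fin (dv i)) ((i : Fin n) → Fin (dv i)) ℂ} (hτ : τ.PosSemidef) :
    ∃ q : ((i : Fin n) → Fin (dv i)) → ℝ, (∀ x, 0 ≤ q x) ∧
      Majorizes hτ.isHermitian.eigenvalues q ∧ ∀ I ∈ W, ∃ V ∈ unitaryGroup _ ℂ,
        ptrace (diagonal fun x => (q x : ℂ)) I = V * ptrace τ I * star V := by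
  obtain ⟨U, hU, hUτ⟩ := exists_unitary_forall_ptrace_conj W hW
    (fun I => (star (hτ.isHermitian.ptrace I).eigenvectorUnitary).1) fun I _ => SetLike.coe_mem _
  have hτ' : (U * τ * star U).PosSemidef := by
    simpa only [star_eq_conjTranspose] using hτ.mul_mul_conjTranspose_same U
  refine ⟨fun x => ((U * τ * star U) x x).re, fun x => (Complex.nonneg_iff.1 hτ'.diag_nonneg).1,
    hτ.isHermitian.majorizes_re_diag_conj hU,
    fun I hI => ⟨_, (star (hτ.isHermitian.ptrace I).eigenvectorUnitary).2, ?_⟩⟩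
  have hdiag : (diagonal fun x => (((U * τ * star U) x x).re : ℂ)) =
      diagonal (U * τ * star U).diag :=
    congrArg diagonal (funext hτ'.isHermitian.coe_re_apply_self)
  have hE := (hτ.isHermitian.ptrace I).conjStarAlgAut_star_eigenvectorUnitary
  rw [Unitary.conjStarAlgAut_star_apply] at hE
  rw [hdiag, ptrace_diagonal_diag, hUτ I hI τ, Unitary.coe_star, star_star, hE, diag_diagonal]

end Classical

theorem dual_problem_partition_classical_solution_general {n : ℕ} (dv : Fin n → ℕ)
    (W : Finset (Finset (Fin n)))
    (hWdisj : ∀ I ∈ W, ∀ J ∈ W, I ≠ J → Disjoint I J)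
    (f : (I : Finset (Fin n)) →
      Matrix ((i : ↥I) → Fin (dv i.1)) ((i : ↥I) → Fin (dv i.1)) ℂ → ℝ)
    (hcont : ∀ I, Continuous (f I))
    (hui : ∀ I : Finset (Fin n),
      ∀ U ∈ Matrix.unitaryGroup ((i : ↥I) → Fin (dv i.1)) ℂ,
      ∀ M, f I (↑U * M * star (U : Matrix _ _ ℂ)) = f I M)
    (p : ((i : Fin n) → Fin (dv i)) → ℝ) (hp0 : ∀ x, 0 ≤ p x) (hp1 : ∑ x, p x = 1) :
    ∃ τs : Matrix ((i : Fin n) → Fin (dv i)) ((i : Fin n) → Fin (dv i)) ℂ,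
      τs.IsDiag ∧ IsState τs ∧
      (∀ hH : τs.IsHermitian, Majorizes p hH.eigenvalues) ∧
      ∀ τ : Matrix ((i : Fin n) → Fin (dv i)) ((i : Fin n) → Fin (dv i)) ℂ,
        IsState τ → (∀ hH : τ.IsHermitian, Majorizes p hH.eigenvalues) →
        ∑ I ∈ W, f I (ptrace τ I) ≤ ∑ I ∈ W, f I (ptrace τs I) := by
  have : Nonempty ((i : Fin n) → Fin (dv i)) := by
    by_contra h
    simp [not_nonempty_iff.1 h] at hp1
  let g (q : ((i : Fin n) → Fin (dv i)) → ℝ) :=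
    ∑ I ∈ W, f I (ptrace (diagonal fun x => (q x : ℂ)) I)
  have hg : Continuous g := by
    refine continuous_finsetSum _ fun I _ => (hcont I).comp ?_
    simp only [ptrace_eq_traceRight, traceRight, reindex_apply, submatrix_diagonal_equiv]
    fun_prop
  obtain ⟨qs, ⟨hqs0, hpqs⟩, hmax⟩ := (isCompact_setOf_nonneg_majorizes p).exists_isMaxOn
    ⟨p, hp0, .refl p⟩ hg.continuousOn
  refine ⟨diagonal fun x => (qs x : ℂ), isDiag_diagonal _, isState_diagonal hqs0 (hpqs.2.trans hp1),
    fun hH => hpqs.trans (majorizes_eigenvalues_diagonal qs hH), fun τ hτ hpτ => ?_⟩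
  obtain ⟨q, hq0, hτq, hqτ⟩ := exists_diagonal_forall_ptrace_conj W hWdisj hτ.1
  calc ∑ I ∈ W, f I (ptrace τ I) = g q := Finset.sum_congr rfl fun I hI => by
        obtain ⟨V, hV, hqV⟩ := hqτ I hI
        rw [hqV, hui I V hV]
    _ ≤ g qs := hmax ⟨hq0, (hpτ _).trans hτq⟩

/-- for a partition `W` of `[n]` and continuous convex unitarily invariant
functions `f_I`, the maximum of `Σ_{I∈W} f_I(τ_I)` over states `τ` with `λ(τ) ⪯ p` is
achieved at a classical (diagonal in the fixed product basis) state. -/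
theorem dual_problem_partition_classical_solution {n : ℕ} (dv : Fin n → ℕ)
    (W : Finset (Finset (Fin n)))
    (hWdisj : ∀ I ∈ W, ∀ J ∈ W, I ≠ J → Disjoint I J)
    (hWcover : ∀ i : Fin n, ∃ I ∈ W, i ∈ I)
    (f : (I : Finset (Fin n)) →
      Matrix ((i : ↥I) → Fin (dv i.1)) ((i : ↥I) → Fin (dv i.1)) ℂ → ℝ)
    (hconv : ∀ I, ConvexOn ℝ Set.univ (f I)) (hcont : ∀ I, Continuous (f I))
    (hui : ∀ I : Finset (Fin n),
      ∀ U ∈ Matrix.unitaryGroup ((i : ↥I) → Fin (dv i.1)) ℂ,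
      ∀ M, f I (↑U * M * star (U : Matrix _ _ ℂ)) = f I M)
    (p : ((i : Fin n) → Fin (dv i)) → ℝ) (hp0 : ∀ x, 0 ≤ p x) (hp1 : ∑ x, p x = 1) :
    ∃ τs : Matrix ((i : Fin n) → Fin (dv i)) ((i : Fin n) → Fin (dv i)) ℂ,
      τs.IsDiag ∧ IsState τs ∧
      (∀ hH : τs.IsHermitian, Majorizes p hH.eigenvalues) ∧
      ∀ τ : Matrix ((i : Fin n) → Fin (dv i)) ((i : Fin n) → Fin (dv i)) ℂ,
        IsState τ → (∀ hH : τ.IsHermitian, Majorizes p hH.eigenvalues) →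
        ∑ I ∈ W, f I (ptrace τ I) ≤ ∑ I ∈ W, f I (ptrace τs I) :=
  dual_problem_partition_classical_solution_general dv W hWdisj f hcont hui p hp0 hp1
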